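/- arXiv:2506.12350 — 5 statements merged into one kernel-verified Lean document; each statement's English description precedes it below -/
import Mathlib

section
/- Let n ≥ 2 and let r : Fin n → ℝ. Define s(k) = ∑_{j ≠ k} σ(r(k) − r(j)). Then for all i, j ∈ Fin n: r(i) > r(j) if and only if s(i) > s(j), and r(i) = r(j) if and only if s(i) = s(j). -/
/-- The logistic (sigmoid) function σ(x) = 1/(1 + exp(−x)). -/
noncomputable def logistic (x : ℝ) : ℝ := 1 / (1 + Real.exp (-x))

lemma logistic_strictMono : StrictMono logistic := by
  intro x y hxy
  unfold logistic
  have hx : (0:ℝ) < 1 + Real.exp (-x) := by positivity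
  have hy : (0:ℝ) < 1 + Real.exp (-y) := by positivity
  have : Real.exp (-y) < Real.exp (-x) := Real.exp_lt_exp.mpr (by linarith)
  exact one_div_lt_one_div_of_lt hy (by linarith)

theorem rlhf_score_monotone (n : ℕ) (hn : 2 ≤ n) (r : Fin n → ℝ)
    (s : Fin n → ℝ)
    (hs : ∀ k, s k = ∑ j ∈ Finset.univ.erase k, logistic (r k - r j)) :
    ∀ i j : Fin n, (r i > r j ↔ s i > s j) ∧ (r i = r j ↔ s i = s j) := by
  have hform : ∀ k, s k = (∑ j : Fin n, logistic (r k - r j)) - logistic 0 := by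
    intro k
    rw [hs k]
    have := Finset.sum_erase_add Finset.univ (fun j => logistic (r k - r j))
      (Finset.mem_univ k)
    simp only [sub_self] at this
    linarith
  have key : ∀ a b : Fin n, r a > r b → s a > s b := by
    intro a b hab
    rw [hform a, hform b]
    apply sub_lt_sub_right
    apply Finset.sum_lt_sum_of_nonempty ⟨⟨0, by omega⟩, Finset.mem_univ _⟩
    intro k _
    exact logistic_strictMono (by linarith)
  have keq : ∀ a b : Fin n, r a = r b → s a = s b := by
    intro a b hab
    rw [hform a, hform b, hab]
  intro i j
  constructor
  · constructor
    · exact key i j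
    · intro h
      rcases lt_trichotomy (r i) (r j) with hlt | heq | hgt
      · exact absurd (key j i hlt) (by linarith)
      · exact absurd (keq i j heq) (by linarith)
      · exact hgt
  · constructor
    · exact keq i j
    · intro h
      rcases lt_trichotomy (r i) (r j) with hlt | heq | hgt
      · exact absurd (key j i hlt) (by linarith)
      · exact heq
      · exact absurd (key i j hgt) (by linarith)
end

section
/- Let n ≥ 2, let M > 0, and let m : Fin n → Fin n → ℝ satisfy m(i,j) + m(j,i) = M for all i ≠ j. Suppose r : Fin n → ℝ satisfies the first-order condition: for every k, ∑_{j ≠ k} (m(k,j)/M − σ(r(k) − r(j))) = 0. Define the score s(k) = ∑_{j ≠ k} m(k,j)/M. Then for all i, j: r(i) > r(j) if and only if s(i) > s(j). -/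
theorem general_rule_implements_score (n : ℕ) (hn : 2 ≤ n) (M : ℝ) (hM : 0 < M)
    (m : Fin n → Fin n → ℝ)
    (hm : ∀ i j : Fin n, i ≠ j → m i j + m j i = M)
    (r : Fin n → ℝ)
    (hfoc : ∀ k : Fin n,
      ∑ j ∈ Finset.univ.erase k, (m k j / M - logistic (r k - r j)) = 0)
    (s : Fin n → ℝ)
    (hs : ∀ k : Fin n, s k = ∑ j ∈ Finset.univ.erase k, m k j / M) :
    ∀ i j : Fin n, r i > r j ↔ s i > s j := by
  -- s k equals the sum of logistics
  have hs' : ∀ k : Fin n, s k = ∑ j ∈ Finset.univ.erase k, logistic (r k - r j) := by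
    intro k
    have h := hfoc k
    rw [Finset.sum_sub_distrib, sub_eq_zero] at h
    rw [hs k, h]
  -- decomposition lemma
  have key : ∀ i j : Fin n, i ≠ j →
      s i - s j = (∑ k ∈ (Finset.univ.erase i).erase j,
        (logistic (r i - r k) - logistic (r j - r k)))
        + (logistic (r i - r j) - logistic (r j - r i)) := by
    intro i j hij
    have hji : j ∈ Finset.univ.erase i := by
      simp [Finset.mem_erase, hij.symm]
    have hij' : i ∈ Finset.univ.erase j := by
      simp [Finset.mem_erase, hij]
    have e1 : s i = (∑ k ∈ (Finset.univ.erase i).erase j, logistic (r i - r k))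
        + logistic (r i - r j) := by
      rw [hs' i, ← Finset.add_sum_erase _ _ hji]; ring
    have e2 : s j = (∑ k ∈ (Finset.univ.erase j).erase i, logistic (r j - r k))
        + logistic (r j - r i) := by
      rw [hs' j, ← Finset.add_sum_erase _ _ hij']; ring
    have hset : (Finset.univ.erase j).erase i = (Finset.univ.erase i).erase j := by
      rw [Finset.erase_right_comm]
    rw [e1, e2, hset, Finset.sum_sub_distrib]
    ring
  -- monotone step
  have step : ∀ i j : Fin n, i ≠ j → r i > r j → s i > s j := by
    intro i j hij hr
    have h := key i j hij
    have h1 : logistic (r j - r i) < logistic (r i - r j) :=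
      logistic_strictMono (by linarith)
    have h2 : (0:ℝ) ≤ ∑ k ∈ (Finset.univ.erase i).erase j,
        (logistic (r i - r k) - logistic (r j - r k)) := by
      apply Finset.sum_nonneg
      intro k _
      have := logistic_strictMono.monotone (show r j - r k ≤ r i - r k by linarith)
      linarith
    have : 0 < s i - s j := by rw [h]; linarith
    linarith
  -- equality step
  have eqstep : ∀ i j : Fin n, r i = r j → s i = s j := by
    intro i j hr
    rcases eq_or_ne i j with h | h
    · rw [h]
    · have hk := key i j h
      have : ∀ k ∈ (Finset.univ.erase i).erase j,
          logistic (r i - r k) - logistic (r j - r k) = 0 := by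
        intro k _; rw [hr]; ring
      rw [Finset.sum_congr rfl this, Finset.sum_const_zero, hr] at hk
      linarith
  intro i j
  constructor
  · intro hr
    have hij : i ≠ j := by
      intro h; rw [h] at hr; exact lt_irrefl _ hr
    exact step i j hij hr
  · intro hsij
    by_contra hr
    push_neg at hr
    rcases lt_or_eq_of_le hr with h | h
    · have hij : j ≠ i := by
        intro he; rw [he] at h; exact lt_irrefl _ h
      have := step j i hij h
      linarith
    · have := eqstep i j h
      linarith
end

section
/- Let n ≥ 2 and let P : Fin n → Fin n → ℝ satisfy P(i,j) + P(j,i) = 1 and P(i,j) ≠ 1/2 for all i ≠ j. Define a(i,j) = 1 if P(i,j) > 1/2 and a(i,j) = 0 otherwise, and define the Copeland win count w(i) = ∑_{k ≠ i} a(i,k). Suppose r : Fin n → ℝ satisfies the first-order condition: for every k, ∑_{j ≠ k} (a(k,j) − σ(r(k) − r(j))) = 0. Then for all i, j: r(i) > r(j) if and only if w(i) > w(j). -/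
lemma logistic_mono : Monotone logistic := logistic_strictMono.monotone

theorem copeland_rlhf_implements_copeland (n : ℕ) (hn : 2 ≤ n)
    (P : Fin n → Fin n → ℝ)
    (hP : ∀ i j : Fin n, i ≠ j → P i j + P j i = 1)
    (hPhalf : ∀ i j : Fin n, i ≠ j → P i j ≠ 1 / 2)
    (a : Fin n → Fin n → ℝ)
    (ha : ∀ i j : Fin n, a i j = if P i j > 1 / 2 then 1 else 0)
    (w : Fin n → ℝ)
    (hw : ∀ i : Fin n, w i = ∑ k ∈ Finset.univ.erase i, a i k)
    (r : Fin n → ℝ)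
    (hfoc : ∀ k : Fin n,
      ∑ j ∈ Finset.univ.erase k, (a k j - logistic (r k - r j)) = 0) :
    ∀ i j : Fin n, r i > r j ↔ w i > w j := by
  -- w k equals the sum of logistics
  have hw' : ∀ k : Fin n, w k = ∑ j ∈ Finset.univ.erase k, logistic (r k - r j) := by
    intro k
    have h := hfoc k
    rw [Finset.sum_sub_distrib, sub_eq_zero] at h
    rw [hw k, h]
  -- decomposition of w for i ≠ j
  have hdec : ∀ i j : Fin n, i ≠ j →
      w i = logistic (r i - r j) +
        ∑ k ∈ (Finset.univ.erase i).erase j, logistic (r i - r k) := by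
    intro i j hij
    have hj : j ∈ Finset.univ.erase i := by simp [Ne.symm hij]
    rw [hw' i, ← Finset.add_sum_erase _ _ hj]
  have hcomm : ∀ i j : Fin n,
      (Finset.univ.erase i).erase j = (Finset.univ.erase j).erase i := fun i j =>
    by ext k; simp; tauto
  -- strict version
  have key : ∀ i j : Fin n, i ≠ j → r j < r i → w j < w i := by
    intro i j hij hr
    rw [hdec i j hij, hdec j i hij.symm, hcomm j i]
    apply add_lt_add_of_lt_of_le
    · exact logistic_strictMono (by linarith)
    · exact Finset.sum_le_sum fun k _ => logistic_mono (by linarith)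
  -- weak version
  have keyle : ∀ i j : Fin n, i ≠ j → r j ≤ r i → w j ≤ w i := by
    intro i j hij hr
    rw [hdec i j hij, hdec j i hij.symm, hcomm j i]
    apply add_le_add
    · exact logistic_mono (by linarith)
    · exact Finset.sum_le_sum fun k _ => logistic_mono (by linarith)
  intro i j
  by_cases hij : i = j
  · subst hij; simp
  · constructor
    · exact key i j hij
    · intro hwij
      by_contra h
      push_neg at h
      exact absurd hwij (not_lt.mpr (keyle j i (Ne.symm hij) h))
end

section
/- Let n ≥ 1 candidates be indexed by Fin n and let there be m ≥ 1 voters, each voter v equipped with a strict total order ≻_v on Fin n (irreflexive, transitive, and total on distinct pairs). Define Maj(a,b) to hold when the number of voters v with a ≻_v b is strictly greater than m/2, and define the Copeland score w(a) = #{b ≠ a : Maj(a,b)}. If every voter prefers candidate y over candidate y' (i.e., y ≻_v y' for all v), then w(y') ≤ w(y). -/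
open Finset

section Majority

variable {V α : Type*} [Fintype V] (pref : V → α → α → Prop) [∀ v a b, Decidable (pref v a b)]

def MajorityPrefers (a b : α) : Prop :=
  (Fintype.card V : ℝ) / 2 < #{v | pref v a b}

variable {pref}

theorem majorityPrefers_of_forall (hV : 1 ≤ Fintype.card V) {a b : α} (h : ∀ v, pref v a b) :
    MajorityPrefers pref a b := by
  have hall : ({v | pref v a b} : Finset V) = univ := filter_true_of_mem fun v _ => h v
  have hpos : (0 : ℝ) < Fintype.card V := by exact_mod_cast hV
  rw [MajorityPrefers, hall, card_univ]
  linarith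

theorem MajorityPrefers.of_forall_pref (htrans : ∀ v a b c, pref v a b → pref v b c → pref v a c)
    {y y' b : α} (hpareto : ∀ v, pref v y y') (hy' : MajorityPrefers pref y' b) :
    MajorityPrefers pref y b := by
  have hsub : ({v | pref v y' b} : Finset V) ⊆ ({v | pref v y b} : Finset V) :=
    monotone_filter_right _ fun v _ => htrans v y y' b (hpareto v)
  have hcard : (#{v | pref v y' b} : ℝ) ≤ #{v | pref v y b} := by
    exact_mod_cast card_le_card hsub
  exact hy'.trans_le hcard

end Majority

section Copeland

variable {α : Type*} [Fintype α] [DecidableEq α] (Maj : α → α → Prop) [DecidableRel Maj]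

def copelandScore (a : α) : ℕ := #{b | b ≠ a ∧ Maj a b}

variable {Maj}

/-- The transposition of `y` and `y'` injects the candidates beaten by `y'` into those
beaten by `y`. -/
theorem copelandScore_le_of_beats {y y' : α} (hyy' : Maj y y') (hbeats : ∀ b, Maj y' b → Maj y b) :
    copelandScore Maj y' ≤ copelandScore Maj y := by
  refine card_le_card_of_injOn (Equiv.swap y y') (fun b hb => ?_) (Equiv.injective _).injOn
  simp only [coe_filter, Set.mem_ofPred_eq, mem_univ, true_and] at hb ⊢
  obtain ⟨hby', hMaj⟩ := hb
  by_cases hby : b = y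
  · subst hby
    simpa [Equiv.swap_apply_left] using ⟨Ne.symm hby', hyy'⟩
  · rw [Equiv.swap_apply_of_ne_of_ne hby hby']
    exact ⟨hby, hbeats b hMaj⟩

end Copeland

theorem copeland_pareto_optimal_general (n : ℕ)
    (V : Type) [Fintype V] (hm : 1 ≤ Fintype.card V)
    (pref : V → Fin n → Fin n → Prop)
    [∀ v a b, Decidable (pref v a b)]
    (htrans : ∀ v a b c, pref v a b → pref v b c → pref v a c)
    (Maj : Fin n → Fin n → Prop)
    [∀ a b, Decidable (Maj a b)]
    (hMaj : ∀ a b, Maj a b ↔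
      ((Finset.univ.filter (fun v => pref v a b)).card : ℝ) > (Fintype.card V : ℝ) / 2)
    (w : Fin n → ℕ)
    (hw : ∀ a, w a = (Finset.univ.filter (fun b => b ≠ a ∧ Maj a b)).card)
    (y y' : Fin n)
    (hpareto : ∀ v, pref v y y') :
    w y' ≤ w y := by
  obtain rfl : Maj = MajorityPrefers pref := funext₂ fun a b => propext (hMaj a b)
  obtain rfl : w = copelandScore (MajorityPrefers pref) := funext hw
  exact copelandScore_le_of_beats (majorityPrefers_of_forall hm hpareto)
    fun b => MajorityPrefers.of_forall_pref htrans hpareto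

theorem copeland_pareto_optimal (n : ℕ) (hn : 1 ≤ n)
    (V : Type) [Fintype V] (hm : 1 ≤ Fintype.card V)
    (pref : V → Fin n → Fin n → Prop)
    [∀ v a b, Decidable (pref v a b)]
    (hirr : ∀ v a, ¬ pref v a a)
    (htrans : ∀ v a b c, pref v a b → pref v b c → pref v a c)
    (htotal : ∀ v a b, a ≠ b → pref v a b ∨ pref v b a)
    (Maj : Fin n → Fin n → Prop)
    [∀ a b, Decidable (Maj a b)]
    (hMaj : ∀ a b, Maj a b ↔
      ((Finset.univ.filter (fun v => pref v a b)).card : ℝ) > (Fintype.card V : ℝ) / 2)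
    (w : Fin n → ℕ)
    (hw : ∀ a, w a = (Finset.univ.filter (fun b => b ≠ a ∧ Maj a b)).card)
    (y y' : Fin n)
    (hpareto : ∀ v, pref v y y') :
    w y' ≤ w y :=
  copeland_pareto_optimal_general n V hm pref htrans Maj hMaj w hw y y' hpareto
end

section
/- Let n ≥ 2, let M > 0, and let m : Fin n → Fin n → ℝ satisfy m(i,j) + m(j,i) = M for all i ≠ j. Let π be a permutation of Fin n with π(i) = j and π(j) = i for some fixed i ≠ j, and suppose m(π(a), π(b)) = m(a,b) for all a ≠ b. Suppose r : Fin n → ℝ satisfies the first-order condition: for every k, ∑_{l ≠ k} (m(k,l)/M − σ(r(k) − r(l))) = 0. Then r(i) = r(j). -/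
theorem rlhf_preference_equivalence (n : ℕ) (hn : 2 ≤ n) (M : ℝ) (hM : 0 < M)
    (m : Fin n → Fin n → ℝ)
    (hm : ∀ i j : Fin n, i ≠ j → m i j + m j i = M)
    (i j : Fin n) (hij : i ≠ j)
    (π : Equiv.Perm (Fin n)) (hπi : π i = j) (hπj : π j = i)
    (hsym : ∀ a b : Fin n, a ≠ b → m (π a) (π b) = m a b)
    (r : Fin n → ℝ)
    (hfoc : ∀ k : Fin n,
      ∑ l ∈ Finset.univ.erase k, (m k l / M - logistic (r k - r l)) = 0) :
    r i = r j := by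
  classical
  -- FOC rewritten: sum of sigmoids equals sum of m/M
  have key : ∀ k : Fin n,
      ∑ l ∈ Finset.univ.erase k, logistic (r k - r l)
        = ∑ l ∈ Finset.univ.erase k, m k l / M := by
    intro k
    have h := hfoc k
    rw [Finset.sum_sub_distrib] at h
    linarith
  -- reindexing via π
  have hmsum : ∑ l ∈ Finset.univ.erase i, m i l
      = ∑ l ∈ Finset.univ.erase j, m j l := by
    refine Finset.sum_equiv π ?_ ?_
    · intro l
      simp only [Finset.mem_erase, Finset.mem_univ, and_true]
      constructor
      · intro hl hc
        exact hl (π.injective (by rw [hc, hπi]))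
      · intro hl hc
        exact hl (by rw [hc, hπi])
    · intro l hl
      simp only [Finset.mem_erase, Finset.mem_univ, and_true] at hl
      rw [← hπi, hsym i l (Ne.symm hl)]
  have hsig : ∑ l ∈ Finset.univ.erase i, logistic (r i - r l)
      = ∑ l ∈ Finset.univ.erase j, logistic (r j - r l) := by
    rw [key i, key j, ← Finset.sum_div, ← Finset.sum_div, hmsum]
  -- split off the cross terms
  have hji : j ∈ Finset.univ.erase i := by
    simp [Ne.symm hij]
  have hijmem : i ∈ Finset.univ.erase j := by
    simp [hij]
  set s : Finset (Fin n) := (Finset.univ.erase i).erase j with hs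
  have h1 : ∑ l ∈ Finset.univ.erase i, logistic (r i - r l)
      = logistic (r i - r j) + ∑ l ∈ s, logistic (r i - r l) := by
    exact (Finset.add_sum_erase _ _ hji).symm
  have h2 : ∑ l ∈ Finset.univ.erase j, logistic (r j - r l)
      = logistic (r j - r i) + ∑ l ∈ s, logistic (r j - r l) := by
    rw [hs, Finset.erase_right_comm]
    exact (Finset.add_sum_erase _ _ hijmem).symm
  -- the strictly monotone function F
  set c : ℝ := r i + r j with hc
  set F : ℝ → ℝ := fun x => logistic (2 * x - c) + ∑ l ∈ s, logistic (x - r l)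
    with hF
  have hFmono : StrictMono F := by
    apply StrictMono.add_monotone
    · intro x y hxy
      exact logistic_strictMono (by linarith)
    · intro x y hxy
      exact Finset.sum_le_sum fun l _ =>
        (logistic_strictMono.monotone (by linarith : x - r l ≤ y - r l))
  have hFi : F (r i) = logistic (r i - r j) + ∑ l ∈ s, logistic (r i - r l) := by
    simp only [hF]
    congr 1
    congr 1
    rw [hc]; ring
  have hFj : F (r j) = logistic (r j - r i) + ∑ l ∈ s, logistic (r j - r l) := by
    simp only [hF]
    congr 1
    congr 1
    rw [hc]; ring
  have : F (r i) = F (r j) := by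
    rw [hFi, hFj, ← h1, ← h2, hsig]
  exact hFmono.injective this
end
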